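/- arXiv:1812.05573 — 2 statements merged into one kernel-verified Lean document; each statement's English description precedes it below -/
import Mathlib

section
/- There exists a Borel probability measure \mu on [0,1] with supp \mu = [0,1] such that the quasi-lower Assouad dimension of \mu equals 0 while the lower local dimension of \mu satisfies \underline{dim}_{loc}\mu(x) \geq 1 for every x in [0,1]. -/
/-!
Lebesgue measure on `[0, 1]` is thinned out around the points `center n = 3/2 · 2⁻ⁿ`: in the
ball of radius `b = radius n` about `center n` only the core ball of radius `a = b ^ (n + 1)`
keeps density `1`, and the surrounding moat gets density `a / b`. Then the balls of radii `b` and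
`b ^ (1 + δ) ≥ a` (once `n ≥ δ`) both have mass `≍ a`, although the ratio of the radii is
unbounded, so no positive exponent is admissible in the quasi-lower Assouad dimension. On the
other hand the density is at most `1`, near any `x ∈ (0, 1]` only finitely many moats occur, and
near `0` every scale contains a gap `(s, 5/4 · s)`, `s = 2⁻ᵏ`, of full density; hence
`μ (B (x, r)) ≍ r` and every local dimension equals `1`.
-/

open MeasureTheory Metric Set Filter

def msupp (μ : Measure ℝ) : Set ℝ :=
  {x | ∀ r > 0, 0 < μ (ball x r)}

def lowerHSet (μ : Measure ℝ) (δ : ℝ) : Set ℝ :=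
  {s | 0 ≤ s ∧ ∃ c₁ > (0:ℝ), ∃ c₂ > (0:ℝ), ∀ x ∈ msupp μ, ∀ r R : ℝ,
    0 < r → 0 < R → r ≤ R ^ (1 + δ) → R ^ (1 + δ) ≤ c₁ →
    c₂ * (R / r) ^ s * (μ (ball x r)).toReal ≤ (μ (ball x R)).toReal}

noncomputable def dimqL (μ : Measure ℝ) : ℝ :=
  ⨅ δ : {δ : ℝ // 0 < δ}, sSup (lowerHSet μ δ.1)

noncomputable def lowerLocalDim (μ : Measure ℝ) (x : ℝ) : ℝ :=
  liminf (fun r => Real.log (μ (ball x r)).toReal / Real.log r) (nhdsWithin 0 (Set.Ioi 0))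


open Topology
open scoped ENNReal

theorem tendsto_log_div_log_of_linear_bounds {φ : ℝ → ℝ} {κ C : ℝ} (hκ : 0 < κ)
    (h : ∀ᶠ r in 𝓝[>] 0, κ * r ≤ φ r ∧ φ r ≤ C * r) :
    Tendsto (fun r => Real.log (φ r) / Real.log r) (𝓝[>] 0) (𝓝 1) := by
  have hratio : ∀ᶠ r in 𝓝[>] (0 : ℝ),
      Real.log (φ r / r) ∈ Icc (Real.log κ) (Real.log C) ∧
        Real.log (φ r) / Real.log r = 1 + Real.log (φ r / r) * (Real.log r)⁻¹ := by
    filter_upwards [h, Ioo_mem_nhdsGT one_pos] with r ⟨hlo, hhi⟩ ⟨hr0, hr1⟩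
    have hφ : 0 < φ r := (mul_pos hκ hr0).trans_le hlo
    have hlog : Real.log r ≠ 0 := (Real.log_neg hr0 hr1).ne
    refine ⟨⟨Real.log_le_log hκ ((le_div_iff₀ hr0).2 hlo),
      Real.log_le_log (by positivity) ((div_le_iff₀ hr0).2 hhi)⟩, ?_⟩
    rw [Real.log_div hφ.ne' hr0.ne']
    field_simp
    ring
  have hbdd : IsBoundedUnder (· ≤ ·) (𝓝[>] 0) (norm ∘ fun r => Real.log (φ r / r)) :=
    ⟨max |Real.log κ| |Real.log C|, eventually_map.2 <|
      hratio.mono fun r hr => abs_le_max_abs_abs hr.1.1 hr.1.2⟩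
  have hlim := (isBoundedUnder_le_mul_tendsto_zero hbdd
    Real.tendsto_log_nhdsGT_zero.inv_tendsto_atBot).const_add 1
  rw [add_zero] at hlim
  exact hlim.congr' (hratio.mono fun r hr => hr.2.symm)

theorem lowerLocalDim_eq_one_of_linear_bounds {μ : Measure ℝ} {x κ C : ℝ} (hκ : 0 < κ)
    (h : ∀ᶠ r in 𝓝[>] 0,
      κ * r ≤ (μ (ball x r)).toReal ∧ (μ (ball x r)).toReal ≤ C * r) :
    lowerLocalDim μ x = 1 :=
  (tendsto_log_div_log_of_linear_bounds hκ h).liminf_eq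

theorem msupp_smul {c : ℝ≥0∞} (hc : c ≠ 0) (μ : Measure ℝ) :
    msupp (c • μ) = msupp μ := by
  ext x
  simp [msupp, pos_iff_ne_zero, hc]

theorem zero_mem_lowerHSet (μ : Measure ℝ) [IsFiniteMeasure μ] {δ : ℝ} (hδ : 0 ≤ δ) :
    0 ∈ lowerHSet μ δ := by
  refine ⟨le_rfl, 1, one_pos, 1, one_pos, fun x _ r R _ hR hrR hRc => ?_⟩
  have hR1 : R ≤ 1 := by
    by_contra! h
    exact (Real.one_lt_rpow h (by linarith)).not_ge hRc
  have hrR : r ≤ R := hrR.trans <| by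
    simpa using Real.rpow_le_rpow_of_exponent_ge hR hR1 (by linarith : (1 : ℝ) ≤ 1 + δ)
  rw [Real.rpow_zero, one_mul, one_mul]
  exact ENNReal.toReal_mono (measure_ne_top _ _) (measure_mono (ball_subset_ball hrR))

theorem notMem_lowerHSet_of_frequently {μ : Measure ℝ} [IsFiniteMeasure μ] {δ s K : ℝ}
    (hδ : 0 < δ) (hs : 0 < s) (h : ∃ᶠ R in 𝓝[>] 0, ∃ x ∈ msupp μ,
      (μ (ball x R)).toReal ≤ K * (μ (ball x (R ^ (1 + δ)))).toReal) :
    s ∉ lowerHSet μ δ := by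
  rintro ⟨-, c₁, hc₁, c₂, hc₂, hH⟩
  have hsmall : ∀ᶠ R in 𝓝[>] (0 : ℝ), R ^ (1 + δ) ≤ c₁ := by
    have : Tendsto (fun R : ℝ => R ^ (1 + δ)) (𝓝[>] 0) (𝓝 0) := by
      simpa [Real.zero_rpow (by linarith : 1 + δ ≠ 0)] using
        (Real.continuousAt_rpow_const 0 (1 + δ) (Or.inr (by linarith))).tendsto.mono_left
          nhdsWithin_le_nhds
    exact this.eventually (ge_mem_nhds hc₁)
  have hlarge : ∀ᶠ R in 𝓝[>] (0 : ℝ), K < c₂ * R ^ (-(δ * s)) :=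
    ((tendsto_rpow_neg_nhdsGT_zero (neg_lt_zero.2 (mul_pos hδ hs))).const_mul_atTop
      hc₂).eventually_gt_atTop K
  -- for `r = R ^ (1 + δ)` the defining inequality would give `c₂ * R ^ (-(δ * s)) ≤ K`
  obtain ⟨R, ⟨x, hx, hK⟩, ⟨hR1, hRK⟩, hR0⟩ :=
    (h.and_eventually ((hsmall.and hlarge).and self_mem_nhdsWithin)).exists
  have hr : 0 < R ^ (1 + δ) := Real.rpow_pos_of_pos hR0 _
  have hμr : 0 < (μ (ball x (R ^ (1 + δ)))).toReal :=
    ENNReal.toReal_pos (hx _ hr).ne' (measure_ne_top _ _)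
  have hratio : (R / R ^ (1 + δ)) ^ s = R ^ (-(δ * s)) := by
    rw [div_eq_mul_inv, ← Real.rpow_neg hR0.le, ← Real.rpow_one_add' hR0.le (by linarith),
      ← Real.rpow_mul hR0.le]
    ring_nf
  have hH' := hH x hx _ R hr hR0 le_rfl hR1
  rw [hratio] at hH'
  exact hRK.not_ge (le_of_mul_le_mul_right (hH'.trans hK) hμr)

theorem dimqL_eq_zero_of_frequently {μ : Measure ℝ} [IsFiniteMeasure μ]
    (h : ∀ δ : ℝ, 0 < δ → ∃ K : ℝ, ∃ᶠ R in 𝓝[>] 0, ∃ x ∈ msupp μ,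
      (μ (ball x R)).toReal ≤ K * (μ (ball x (R ^ (1 + δ)))).toReal) :
    dimqL μ = 0 := by
  have hH : ∀ δ : {δ : ℝ // 0 < δ}, sSup (lowerHSet μ δ.1) = 0 := fun ⟨δ, hδ⟩ => by
    obtain ⟨K, hK⟩ := h δ hδ
    have : lowerHSet μ δ = {0} := eq_singleton_iff_unique_mem.2
      ⟨zero_mem_lowerHSet μ hδ.le, fun s hs =>
        hs.1.eq_or_lt.elim Eq.symm fun hpos =>
          absurd hs (notMem_lowerHSet_of_frequently hδ hpos hK)⟩
    rw [this, csSup_singleton]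
  have : Nonempty {δ : ℝ // 0 < δ} := ⟨⟨1, one_pos⟩⟩
  simp only [dimqL, hH, ciInf_const]

namespace QuasiLowerExample

noncomputable section

def scale (n : ℕ) : ℝ := 2⁻¹ ^ n

def center (n : ℕ) : ℝ := 3 / 2 * scale n

def radius (n : ℕ) : ℝ := scale n / 8

def coreRadius (n : ℕ) : ℝ := radius n ^ (n + 1)

def moatLevel (n : ℕ) : ℝ := radius n ^ n

def moat (n : ℕ) : Set ℝ := ball (center n) (radius n) \ ball (center n) (coreRadius n)

open Classical in
def density (y : ℝ) : ℝ≥0∞ :=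
  (Ioo 0 1).indicator (fun y => ⨅ n, if y ∈ moat n then ENNReal.ofReal (moatLevel n) else 1) y

def baseMeasure : Measure ℝ := volume.withDensity density

def probMeasure : Measure ℝ := (baseMeasure univ)⁻¹ • baseMeasure

theorem scale_pos (n : ℕ) : 0 < scale n := by unfold scale; positivity

theorem scale_le_one (n : ℕ) : scale n ≤ 1 := pow_le_one₀ (by norm_num) (by norm_num)

theorem scale_antitone : Antitone scale := fun _ _ h =>
  pow_le_pow_of_le_one (by norm_num) (by norm_num) h

theorem scale_le_half {m n : ℕ} (h : m < n) : scale n ≤ scale m / 2 := by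
  have : scale n ≤ scale (m + 1) := pow_le_pow_of_le_one (by norm_num) (by norm_num) h
  simpa [scale, pow_succ, div_eq_mul_inv] using this

theorem radius_pos (n : ℕ) : 0 < radius n := by unfold radius; linarith [scale_pos n]

theorem radius_le_one (n : ℕ) : radius n ≤ 1 := by unfold radius; linarith [scale_le_one n]

theorem coreRadius_le_radius (n : ℕ) : coreRadius n ≤ radius n :=
  pow_le_of_le_one (radius_pos n).le (radius_le_one n) n.succ_ne_zero

theorem moatLevel_pos (n : ℕ) : 0 < moatLevel n := pow_pos (radius_pos n) _

theorem moatLevel_le_one (n : ℕ) : moatLevel n ≤ 1 :=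
  pow_le_one₀ (radius_pos n).le (radius_le_one n)

theorem moatLevel_antitone {m n : ℕ} (h : m ≤ n) : moatLevel n ≤ moatLevel m := by
  have hr : radius n ≤ radius m := by
    unfold radius
    linarith [scale_antitone h]
  calc moatLevel n ≤ radius m ^ n := pow_le_pow_left₀ (radius_pos n).le hr n
    _ ≤ moatLevel m := pow_le_pow_of_le_one (radius_pos m).le (radius_le_one m) h

theorem moatLevel_mul_radius (n : ℕ) : moatLevel n * radius n = coreRadius n :=
  (pow_succ _ _).symm

theorem ball_center_radius (n : ℕ) :
    ball (center n) (radius n) = Ioo (11 / 8 * scale n) (13 / 8 * scale n) := by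
  rw [Real.ball_eq_Ioo, center, radius]
  congr 1 <;> ring

theorem ball_center_radius_subset {n : ℕ} (hn : 1 ≤ n) :
    ball (center n) (radius n) ⊆ Ioo 0 1 := by
  have : scale n ≤ 1 / 2 := by simpa [scale] using scale_le_half hn
  rw [ball_center_radius]
  exact Ioo_subset_Ioo (by linarith [scale_pos n]) (by linarith)

theorem notMem_ball_of_lt {m n : ℕ} (h : m < n) {y : ℝ}
    (hy : y ∈ ball (center n) (radius n)) : y ∉ ball (center m) (radius m) := by
  rw [ball_center_radius] at *
  intro hy'
  linarith [hy.2, hy'.1, scale_le_half h, scale_pos m]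

theorem eq_of_mem_ball {m n : ℕ} {y : ℝ} (hm : y ∈ ball (center m) (radius m))
    (hn : y ∈ ball (center n) (radius n)) : m = n := by
  by_contra hne
  rcases Nat.lt_or_gt_of_ne hne with h | h
  · exact notMem_ball_of_lt h hn hm
  · exact notMem_ball_of_lt h hm hn

theorem le_of_scale_lt_of_mem_ball {M n : ℕ} {y : ℝ} (hy : scale M < y)
    (hn : y ∈ ball (center n) (radius n)) : n ≤ M := by
  by_contra! h
  rw [ball_center_radius] at hn
  linarith [hn.2, scale_le_half h, scale_pos M]

theorem notMem_ball_of_mem_gap {k : ℕ} {y : ℝ} (hy : y ∈ Ioo (scale k) (5 / 4 * scale k))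
    (n : ℕ) : y ∉ ball (center n) (radius n) := by
  rw [ball_center_radius]
  rintro ⟨hlo, hhi⟩
  rcases lt_trichotomy n k with h | rfl | h
  · linarith [hy.2, scale_le_half h, scale_pos k]
  · linarith [hy.2, scale_pos n]
  · linarith [hy.1, scale_le_half h, scale_pos k]

theorem measurable_density : Measurable density := by
  refine Measurable.indicator (Measurable.iInf fun n => ?_) measurableSet_Ioo
  exact Measurable.ite (measurableSet_ball.diff measurableSet_ball) measurable_const
    measurable_const

theorem density_le_one (y : ℝ) : density y ≤ 1 := by
  refine indicator_apply_le' (fun _ => (iInf_le _ 0).trans ?_) fun _ => zero_le_one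
  split_ifs
  exacts [ENNReal.ofReal_le_one.2 (moatLevel_le_one 0), le_rfl]

theorem density_le_of_mem_moat {n : ℕ} {y : ℝ} (hy : y ∈ moat n) :
    density y ≤ ENNReal.ofReal (moatLevel n) :=
  indicator_apply_le' (fun _ => (iInf_le _ n).trans (if_pos hy).le) fun _ => zero_le

theorem le_density {C : ℝ≥0∞} {y : ℝ} (hy : y ∈ Ioo 0 1) (hC : C ≤ 1)
    (h : ∀ n, y ∈ moat n → C ≤ ENNReal.ofReal (moatLevel n)) : C ≤ density y := by
  rw [density, indicator_of_mem hy]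
  refine le_iInf fun n => ?_
  split_ifs with hn
  exacts [h n hn, hC]

theorem le_baseMeasure {s : Set ℝ} (hs : MeasurableSet s) {C : ℝ≥0∞}
    (h : ∀ y ∈ s, C ≤ density y) : C * volume s ≤ baseMeasure s := by
  rw [baseMeasure, withDensity_apply _ hs, ← setLIntegral_const]
  exact setLIntegral_mono measurable_density h

theorem baseMeasure_le {s : Set ℝ} (hs : MeasurableSet s) {C : ℝ≥0∞}
    (h : ∀ y ∈ s, density y ≤ C) : baseMeasure s ≤ C * volume s := by
  rw [baseMeasure, withDensity_apply _ hs, ← setLIntegral_const]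
  exact setLIntegral_mono measurable_const h

theorem baseMeasure_ball_le (x r : ℝ) : baseMeasure (ball x r) ≤ ENNReal.ofReal (2 * r) := by
  simpa [Real.volume_ball] using baseMeasure_le measurableSet_ball fun y _ => density_le_one y

theorem baseMeasure_compl_Icc : baseMeasure (Icc 0 1)ᶜ = 0 := by
  simpa using baseMeasure_le measurableSet_Icc.compl (C := 0) fun y hy =>
    (indicator_of_notMem (fun h => hy (Ioo_subset_Icc_self h)) _).le

instance : IsFiniteMeasure baseMeasure := by
  refine ⟨?_⟩
  rw [← measure_congr (ae_eq_univ.2 baseMeasure_compl_Icc)]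
  exact (baseMeasure_le measurableSet_Icc fun y _ => density_le_one y).trans_lt (by simp)

theorem ofReal_le_baseMeasure_ball_center {n : ℕ} (hn : 1 ≤ n) {r : ℝ}
    (hr : coreRadius n ≤ r) :
    ENNReal.ofReal (2 * coreRadius n) ≤ baseMeasure (ball (center n) r) := by
  have hcore : ∀ y ∈ ball (center n) (coreRadius n), 1 ≤ density y := fun y hy => by
    have hy' := ball_subset_ball (coreRadius_le_radius n) hy
    refine le_density (ball_center_radius_subset hn hy') le_rfl fun m hm => ?_
    obtain rfl := eq_of_mem_ball hm.1 hy'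
    exact absurd hy hm.2
  calc ENNReal.ofReal (2 * coreRadius n) = 1 * volume (ball (center n) (coreRadius n)) := by
        rw [Real.volume_ball, one_mul]
    _ ≤ baseMeasure (ball (center n) (coreRadius n)) := le_baseMeasure measurableSet_ball hcore
    _ ≤ baseMeasure (ball (center n) r) := measure_mono (ball_subset_ball hr)

theorem baseMeasure_ball_center_radius_le (n : ℕ) :
    baseMeasure (ball (center n) (radius n)) ≤ 2 * ENNReal.ofReal (2 * coreRadius n) := by
  have hmoat :
      baseMeasure (moat n) ≤ ENNReal.ofReal (moatLevel n) * ENNReal.ofReal (2 * radius n) :=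
    (baseMeasure_le (measurableSet_ball.diff measurableSet_ball) fun y hy =>
      density_le_of_mem_moat hy).trans (by rw [← Real.volume_ball]; gcongr; exact sdiff_subset)
  calc baseMeasure (ball (center n) (radius n))
      ≤ baseMeasure (ball (center n) (radius n) ∩ ball (center n) (coreRadius n)) +
          baseMeasure (moat n) := measure_le_inter_add_sdiff _ _ _
    _ ≤ ENNReal.ofReal (2 * coreRadius n) +
          ENNReal.ofReal (moatLevel n) * ENNReal.ofReal (2 * radius n) := by
        gcongr
        exact (measure_mono inter_subset_right).trans (baseMeasure_ball_le _ _)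
    _ = 2 * ENNReal.ofReal (2 * coreRadius n) := by
        rw [← ENNReal.ofReal_mul (moatLevel_pos n).le, mul_left_comm, moatLevel_mul_radius]
        exact (two_mul _).symm

theorem ofReal_le_baseMeasure_ball_zero {r : ℝ} (hr0 : 0 < r) (hr1 : r ≤ 1) :
    ENNReal.ofReal (1 / 10 * r) ≤ baseMeasure (ball 0 r) := by
  obtain ⟨k, hk_lt, hk_le⟩ := exists_nat_pow_near_of_lt_one (x := 4 / 5 * r) (by positivity)
    (by linarith) (by norm_num : (0 : ℝ) < 2⁻¹) (by norm_num)
  set s := scale (k + 1)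
  have hs : s = scale k / 2 := by simp [s, scale, pow_succ, div_eq_mul_inv]
  have hs_lt : s < 4 / 5 * r := hk_lt
  have hscale : 4 / 5 * r ≤ scale k := hk_le
  have hgap : Ioo s (5 / 4 * s) ⊆ ball 0 r ∩ Ioo 0 1 := fun y hy => by
    have := scale_pos (k + 1)
    rw [Real.ball_eq_Ioo]
    exact ⟨⟨by linarith [hy.1], by linarith [hy.2]⟩, by linarith [hy.1], by linarith [hy.2]⟩
  calc ENNReal.ofReal (1 / 10 * r) ≤ 1 * volume (Ioo s (5 / 4 * s)) := by
        rw [Real.volume_Ioo, one_mul]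
        exact ENNReal.ofReal_le_ofReal (by linarith)
    _ ≤ baseMeasure (Ioo s (5 / 4 * s)) := le_baseMeasure measurableSet_Ioo fun y hy =>
        le_density (hgap hy).2 le_rfl fun n hn => absurd hn.1 (notMem_ball_of_mem_gap hy n)
    _ ≤ baseMeasure (ball 0 r) := measure_mono fun y hy => (hgap hy).1

theorem ofReal_le_baseMeasure_ball {M : ℕ} {x r : ℝ} (hx : x ≤ 1) (hr0 : 0 < r)
    (hr : r ≤ x - scale M) : ENNReal.ofReal (moatLevel M * r) ≤ baseMeasure (ball x r) := by
  have hsub : Ioo (x - r) x ⊆ Ioo (scale M) 1 := Ioo_subset_Ioo (by linarith) hx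
  calc ENNReal.ofReal (moatLevel M * r)
      = ENNReal.ofReal (moatLevel M) * volume (Ioo (x - r) x) := by
        rw [Real.volume_Ioo, ← ENNReal.ofReal_mul (moatLevel_pos M).le, sub_sub_cancel]
    _ ≤ baseMeasure (Ioo (x - r) x) := le_baseMeasure measurableSet_Ioo fun y hy =>
        le_density (Ioo_subset_Ioo_left (scale_pos M).le (hsub hy))
          (ENNReal.ofReal_le_one.2 (moatLevel_le_one M)) fun n hn =>
          ENNReal.ofReal_le_ofReal <|
            moatLevel_antitone (le_of_scale_lt_of_mem_ball (hsub hy).1 hn.1)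
    _ ≤ baseMeasure (ball x r) := measure_mono <| by
        rw [Real.ball_eq_Ioo]; exact Ioo_subset_Ioo le_rfl (by linarith)

theorem exists_ofReal_le_baseMeasure_ball {x : ℝ} (hx : x ∈ Icc 0 1) :
    ∃ κ > 0, ∀ᶠ r in 𝓝[>] 0, ENNReal.ofReal (κ * r) ≤ baseMeasure (ball x r) := by
  rcases hx.1.eq_or_lt with rfl | hx0
  · exact ⟨1 / 10, by norm_num, eventually_of_mem (Ioc_mem_nhdsGT one_pos) fun r hr =>
      ofReal_le_baseMeasure_ball_zero hr.1 hr.2⟩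
  · obtain ⟨M, hM⟩ := exists_pow_lt_of_lt_one hx0 (by norm_num : (2 : ℝ)⁻¹ < 1)
    exact ⟨moatLevel M, moatLevel_pos M, eventually_of_mem (Ioc_mem_nhdsGT (sub_pos.2 hM))
      fun r hr => ofReal_le_baseMeasure_ball hx.2 hr.1 hr.2⟩

theorem msupp_baseMeasure : msupp baseMeasure = Icc 0 1 := by
  ext x
  refine ⟨fun hx => ?_, fun hx r hr => ?_⟩
  · by_contra hx'
    obtain ⟨r, hr, hball⟩ := Metric.isOpen_iff.1 isClosed_Icc.isOpen_compl x hx'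
    exact (hx r hr).ne' (measure_mono_null hball baseMeasure_compl_Icc)
  · obtain ⟨κ, hκ, hev⟩ := exists_ofReal_le_baseMeasure_ball hx
    obtain ⟨ρ, hρ, hρ0, hρr⟩ := (hev.and (Ioo_mem_nhdsGT hr)).exists
    exact (ENNReal.ofReal_pos.2 (mul_pos hκ hρ0)).trans_le
      (hρ.trans (measure_mono (ball_subset_ball hρr.le)))

instance : NeZero baseMeasure := ⟨fun h => by
  have h0 : (0 : ℝ) ∈ msupp baseMeasure := msupp_baseMeasure ▸ left_mem_Icc.2 zero_le_one
  have := h0 1 one_pos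
  simp [h] at this⟩

instance : IsProbabilityMeasure probMeasure := isProbabilityMeasureSMul

theorem toReal_probMeasure (s : Set ℝ) :
    (probMeasure s).toReal = (baseMeasure univ)⁻¹.toReal * (baseMeasure s).toReal := by
  rw [probMeasure, Measure.smul_apply, smul_eq_mul, ENNReal.toReal_mul]

theorem toReal_inv_baseMeasure_univ_pos : 0 < (baseMeasure univ)⁻¹.toReal :=
  ENNReal.toReal_pos (ENNReal.inv_ne_zero.2 (measure_ne_top _ _))
    (ENNReal.inv_ne_top.2 (NeZero.ne _))

theorem msupp_probMeasure : msupp probMeasure = Icc 0 1 := by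
  rw [probMeasure, msupp_smul (ENNReal.inv_ne_zero.2 (measure_ne_top _ _)), msupp_baseMeasure]

theorem lowerLocalDim_probMeasure {x : ℝ} (hx : x ∈ Icc 0 1) :
    lowerLocalDim probMeasure x = 1 := by
  obtain ⟨κ, hκ, hev⟩ := exists_ofReal_le_baseMeasure_ball hx
  have hc := toReal_inv_baseMeasure_univ_pos
  refine lowerLocalDim_eq_one_of_linear_bounds (mul_pos hc hκ)
    (C := (baseMeasure univ)⁻¹.toReal * 2) ?_
  filter_upwards [hev, self_mem_nhdsWithin] with r hr (hr0 : 0 < r)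
  have hlo := (ENNReal.ofReal_le_iff_le_toReal (measure_ne_top _ _)).1 hr
  have hhi := ENNReal.toReal_le_of_le_ofReal (by positivity) (baseMeasure_ball_le x r)
  rw [toReal_probMeasure, mul_assoc, mul_assoc]
  exact ⟨mul_le_mul_of_nonneg_left hlo hc.le, mul_le_mul_of_nonneg_left hhi hc.le⟩

theorem probMeasure_ball_center_radius_le {n : ℕ} (hn : 1 ≤ n) {r : ℝ}
    (hr : coreRadius n ≤ r) :
    (probMeasure (ball (center n) (radius n))).toReal ≤
      2 * (probMeasure (ball (center n) r)).toReal := by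
  have h : baseMeasure (ball (center n) (radius n)) ≤ 2 * baseMeasure (ball (center n) r) :=
    (baseMeasure_ball_center_radius_le n).trans
      (by gcongr; exact ofReal_le_baseMeasure_ball_center hn hr)
  have h' := ENNReal.toReal_mono (by finiteness) h
  rw [ENNReal.toReal_mul, ENNReal.toReal_ofNat] at h'
  rw [toReal_probMeasure, toReal_probMeasure, mul_left_comm]
  exact mul_le_mul_of_nonneg_left h' toReal_inv_baseMeasure_univ_pos.le

theorem tendsto_radius : Tendsto radius atTop (𝓝[>] 0) := by
  refine tendsto_nhdsWithin_iff.2 ⟨?_, Eventually.of_forall radius_pos⟩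
  have := (tendsto_pow_atTop_nhds_zero_of_lt_one (by norm_num : (0 : ℝ) ≤ 2⁻¹)
    (by norm_num)).div_const 8
  rwa [zero_div] at this

theorem dimqL_probMeasure : dimqL probMeasure = 0 := by
  refine dimqL_eq_zero_of_frequently fun δ hδ =>
    ⟨2, tendsto_radius.frequently (Eventually.frequently ?_)⟩
  filter_upwards [eventually_ge_atTop 1,
    tendsto_natCast_atTop_atTop.eventually_ge_atTop δ] with n hn hnδ
  refine ⟨center n, msupp_probMeasure ▸
    Ioo_subset_Icc_self (ball_center_radius_subset hn (mem_ball_self (radius_pos n))), ?_⟩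
  refine probMeasure_ball_center_radius_le hn ?_
  rw [coreRadius, ← Real.rpow_natCast]
  push_cast
  exact Real.rpow_le_rpow_of_exponent_ge (radius_pos n) (radius_le_one n) (by linarith)

end

end QuasiLowerExample

open QuasiLowerExample in
theorem exists_measure_quasi_lower_zero_local_dim_one :
    ∃ μ : Measure ℝ, IsProbabilityMeasure μ ∧ msupp μ = Set.Icc 0 1 ∧
      dimqL μ = 0 ∧ ∀ x ∈ Set.Icc (0:ℝ) 1, 1 ≤ lowerLocalDim μ x :=
  ⟨probMeasure, inferInstance, msupp_probMeasure, dimqL_probMeasure,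
    fun _ hx => (lowerLocalDim_probMeasure hx).ge⟩
end

section
/- There exists a Borel probability measure \mu on [0,1] such that the lower Assouad dimension and upper Assouad dimension of \mu are both equal to 1, but \mu is not s-regular for any s \geq 0. -/
open MeasureTheory Metric Set

def lowerASet (μ : Measure ℝ) : Set ℝ :=
  {s | 0 ≤ s ∧ ∃ c₁ > (0:ℝ), ∃ c₂ > (0:ℝ), ∀ x ∈ msupp μ, ∀ r R : ℝ,
    0 < r → r ≤ R → R ≤ c₁ →
    c₂ * (R / r) ^ s * (μ (ball x r)).toReal ≤ (μ (ball x R)).toReal}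

def upperASet (μ : Measure ℝ) : Set ℝ :=
  {s | 0 ≤ s ∧ ∃ c₁ > (0:ℝ), ∃ c₂ > (0:ℝ), ∀ x ∈ msupp μ, ∀ r R : ℝ,
    0 < r → r ≤ R → R ≤ c₁ →
    (μ (ball x R)).toReal ≤ c₂ * (R / r) ^ s * (μ (ball x r)).toReal}

/-- Lower Assouad dimension of a measure on `ℝ`. -/
noncomputable def dimL (μ : Measure ℝ) : ℝ := sSup (lowerASet μ)

/-- Upper Assouad dimension of a measure on `ℝ`. -/
noncomputable def dimA (μ : Measure ℝ) : ℝ := sInf (upperASet μ)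

/-- `μ` is `s`-regular. -/
def IsSRegular (μ : Measure ℝ) (s : ℝ) : Prop :=
  ∃ c > (0:ℝ), ∀ x ∈ msupp μ, ∀ r : ℝ, 0 < r → r < diam (msupp μ) →
    ENNReal.ofReal (c⁻¹ * r ^ s) ≤ μ (ball x r) ∧
    μ (ball x r) ≤ ENNReal.ofReal (c * r ^ s)

open Filter Topology Real

/-!
The measure `μ` on `[0, 1]` with density `(1 - log t) / 2` satisfies
`μ (ball x r) ≍ r * (2 - log (max x r))` for `x ∈ [0, 1]` and `r ≤ 1`. The logarithmic factor is
decreasing in `r` and varies too slowly to be seen by any power `(R / r) ^ (1 - s)`, so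
`μ (ball x R) / μ (ball x r)` lies between `c_s (R / r) ^ s` for every `s < 1` and `C (R / r)`;
at `x = 1` the masses are `≍ r`, which pins both Assouad dimensions at `1`. Regularity fails:
at `x = 1` an `s`-regular `μ` would need `s = 1`, while `μ (ball 0 r) ≍ r log (1 / r)` is not `≍ r`.
-/

lemma le_of_eventually_rpow_le_mul_rpow {a b K : ℝ}
    (h : ∀ᶠ r in 𝓝[>] (0 : ℝ), r ^ a ≤ K * r ^ b) : b ≤ a := by
  by_contra! hab
  have hlim : Tendsto (fun r : ℝ => r ^ (a - b)) (𝓝[>] 0) atTop :=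
    tendsto_rpow_neg_nhdsGT_zero (by linarith)
  obtain ⟨r, hle, hgt, hr⟩ :=
    (h.and ((hlim.eventually_gt_atTop K).and self_mem_nhdsWithin)).exists
  have hrb : 0 < r ^ b := rpow_pos_of_pos hr b
  have : K * r ^ b < r ^ a := by
    rw [← sub_add_cancel a b, rpow_add hr]; exact mul_lt_mul_of_pos_right hgt hrb
  linarith

lemma div_rpow_mul_self {R r s : ℝ} (hR : 0 ≤ R) (hr : 0 < r) :
    (R / r) ^ s * r = R ^ s * r ^ (1 - s) := by
  rw [div_rpow hR hr.le, rpow_sub hr, rpow_one]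
  field_simp

noncomputable def logGauge (x r : ℝ) : ℝ := r * (2 - log (max x r))

section logGauge

variable {x r R : ℝ}

lemma log_max_nonpos (hx : x ≤ 1) (hr : r ∈ Ioc 0 1) : log (max x r) ≤ 0 :=
  log_nonpos (hr.1.le.trans (le_max_right x r)) (max_le hx hr.2)

lemma logGauge_pos (hx : x ≤ 1) (hr : r ∈ Ioc 0 1) : 0 < logGauge x r :=
  mul_pos hr.1 (by linarith [log_max_nonpos hx hr])

lemma logGauge_one (hr : r ≤ 1) : logGauge 1 r = 2 * r := by
  simp [logGauge, max_eq_left hr, mul_comm]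

lemma logGauge_zero (hr : 0 ≤ r) : logGauge 0 r = r * (2 - log r) := by
  simp [logGauge, max_eq_right hr]

lemma log_max_le_log_max (hr : 0 < r) (hrR : r ≤ R) : log (max x r) ≤ log (max x R) :=
  log_le_log (hr.trans_le (le_max_right x r)) (max_le_max le_rfl hrR)

lemma logGauge_le_div_mul (hr : 0 < r) (hrR : r ≤ R) : logGauge x R ≤ R / r * logGauge x r := by
  have hlog := log_max_le_log_max (x := x) hr hrR
  calc logGauge x R ≤ R * (2 - log (max x r)) :=
        mul_le_mul_of_nonneg_left (by linarith) (hr.le.trans hrR)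
    _ = R / r * logGauge x r := by rw [logGauge]; field_simp

lemma max_mul_le_mul_max (hr : 0 < r) (hrR : r ≤ R) : max x R * r ≤ R * max x r := by
  rcases le_total x R with h | h
  · rw [max_eq_right h]
    exact mul_le_mul_of_nonneg_left (le_max_right x r) (hr.le.trans hrR)
  · rw [max_eq_left h, max_eq_left (hrR.trans h), mul_comm R]
    exact mul_le_mul_of_nonneg_left hrR (hr.le.trans (hrR.trans h))

/-- Shrinking `R` to `r` raises the logarithmic factor by `log (max x R / max x r) ≤ log (R / r)`,
which `(R / r) ^ (1 - s) ≥ 1 + (1 - s) log (R / r)` absorbs. -/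
lemma mul_rpow_mul_logGauge_le {s : ℝ} (hs : s < 1) (hx : x ≤ 1) (hr : 0 < r) (hrR : r ≤ R)
    (hR : R ≤ 1) : min 1 (2 * (1 - s)) * (R / r) ^ s * logGauge x r ≤ logGauge x R := by
  set a := max x r
  set A := max x R
  set P := (R / r) ^ (1 - s)
  have ha : 0 < a := hr.trans_le (le_max_right x r)
  have hA : 0 < A := (hr.trans_le hrR).trans_le (le_max_right x R)
  have hRr : 0 < R / r := div_pos (hr.trans_le hrR) hr
  have hu : 0 ≤ log A - log a := sub_nonneg.2 (log_max_le_log_max hr hrR)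
  have hM : 2 ≤ 2 - log A := by linarith [log_max_nonpos hx ⟨hr.trans_le hrR, hR⟩]
  have hP : 1 + (1 - s) * (log A - log a) ≤ P := by
    have hdiv : A / a ≤ R / r := by
      rw [div_le_div_iff₀ ha hr]; exact max_mul_le_mul_max hr hrR
    calc 1 + (1 - s) * (log A - log a) ≤ exp ((log A - log a) * (1 - s)) := by
          linarith [add_one_le_exp ((log A - log a) * (1 - s))]
      _ = exp (log (A / a) * (1 - s)) := by rw [log_div hA.ne' ha.ne']
      _ = (A / a) ^ (1 - s) := (rpow_def_of_pos (div_pos hA ha) _).symm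
      _ ≤ P := rpow_le_rpow (div_pos hA ha).le hdiv (by linarith)
  have hkey : min 1 (2 * (1 - s)) * (2 - log a) ≤ P * (2 - log A) := by
    have hc₁ : min 1 (2 * (1 - s)) ≤ 1 := min_le_left _ _
    have hc₂ : min 1 (2 * (1 - s)) ≤ 2 * (1 - s) := min_le_right _ _
    have hL : 2 - log a = (2 - log A) + (log A - log a) := by ring
    rw [hL]
    nlinarith [mul_le_mul_of_nonneg_right hP (by linarith : (0 : ℝ) ≤ 2 - log A),
      mul_nonneg (mul_nonneg (by linarith : (0 : ℝ) ≤ 1 - s) hu) (by linarith : (0 : ℝ) ≤ -log A),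
      mul_le_mul_of_nonneg_right hc₁ (by linarith : (0 : ℝ) ≤ 2 - log A),
      mul_le_mul_of_nonneg_right hc₂ hu]
  have hsplit : (R / r) ^ s * r * P = R := by
    rw [mul_right_comm, ← rpow_add hRr, add_sub_cancel, rpow_one, div_mul_cancel₀ _ hr.ne']
  calc min 1 (2 * (1 - s)) * (R / r) ^ s * logGauge x r
      = (R / r) ^ s * r * (min 1 (2 * (1 - s)) * (2 - log a)) := by rw [logGauge]; ring
    _ ≤ (R / r) ^ s * r * (P * (2 - log A)) :=
        mul_le_mul_of_nonneg_left hkey (by positivity)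
    _ = (R / r) ^ s * r * P * (2 - log A) := by ring
    _ = logGauge x R := by rw [hsplit]; rfl

end logGauge

def IsLogGaugeComparable (μ : Measure ℝ) (C : ℝ) : Prop :=
  ∀ x ∈ Icc (0 : ℝ) 1, ∀ r ∈ Ioc (0 : ℝ) 1,
    logGauge x r ≤ C * μ.real (ball x r) ∧ μ.real (ball x r) ≤ C * logGauge x r

namespace IsLogGaugeComparable

variable {μ : Measure ℝ} {C : ℝ} (h : IsLogGaugeComparable μ C)
include h

lemma measureReal_ball_pos {x r : ℝ} (hx : x ∈ Icc 0 1) (hr : r ∈ Ioc 0 1) :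
    0 < μ.real (ball x r) := by
  refine measureReal_nonneg.lt_of_ne fun h0 => ?_
  have := (h x hx r hr).1
  rw [← h0, mul_zero] at this
  exact (logGauge_pos hx.2 hr).not_ge this

lemma pos : 0 < C := by
  have h01 : (0 : ℝ) ∈ Icc 0 1 := ⟨le_rfl, zero_le_one⟩
  have hr : (1 : ℝ) ∈ Ioc 0 1 := ⟨one_pos, le_rfl⟩
  exact pos_of_mul_pos_left ((logGauge_pos h01.2 hr).trans_le (h 0 h01 1 hr).1)
    (h.measureReal_ball_pos h01 hr).le

lemma Icc_subset_msupp : Icc 0 1 ⊆ msupp μ := fun _ hx r hr =>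
  have hr' : min r 1 ∈ Ioc (0 : ℝ) 1 := ⟨lt_min hr one_pos, min_le_right r 1⟩
  (ENNReal.toReal_pos_iff.1 (h.measureReal_ball_pos hx hr')).1.trans_le
    (measure_mono (ball_subset_ball (min_le_left r 1)))

lemma msupp_eq (hsupp : msupp μ ⊆ Icc 0 1) : msupp μ = Icc 0 1 :=
  hsupp.antisymm h.Icc_subset_msupp

lemma two_mul_le_mul_measureReal_ball_one {r : ℝ} (hr : r ∈ Ioc 0 1) :
    2 * r ≤ C * μ.real (ball 1 r) := by
  simpa [logGauge_one hr.2] using (h 1 ⟨zero_le_one, le_rfl⟩ r hr).1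

lemma measureReal_ball_one_le {r : ℝ} (hr : r ∈ Ioc 0 1) :
    μ.real (ball 1 r) ≤ C * (2 * r) := by
  simpa [logGauge_one hr.2] using (h 1 ⟨zero_le_one, le_rfl⟩ r hr).2

lemma one_mem_upperASet (hsupp : msupp μ ⊆ Icc 0 1) : (1 : ℝ) ∈ upperASet μ := by
  refine ⟨zero_le_one, 1, one_pos, C ^ 2, pow_pos h.pos 2, fun x hx r R hr hrR hR => ?_⟩
  have hx := hsupp hx
  have hr' : r ∈ Ioc (0 : ℝ) 1 := ⟨hr, hrR.trans hR⟩
  rw [rpow_one]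
  calc μ.real (ball x R) ≤ C * logGauge x R := (h x hx R ⟨hr.trans_le hrR, hR⟩).2
    _ ≤ C * (R / r * logGauge x r) :=
        mul_le_mul_of_nonneg_left (logGauge_le_div_mul hr hrR) h.pos.le
    _ ≤ C * (R / r * (C * μ.real (ball x r))) := by
        gcongr
        · exact h.pos.le
        · exact div_nonneg (hr.le.trans hrR) hr.le
        · exact (h x hx r hr').1
    _ = C ^ 2 * (R / r) * μ.real (ball x r) := by ring

lemma one_le_of_mem_upperASet {s : ℝ} (hs : s ∈ upperASet μ) : 1 ≤ s := by
  obtain ⟨-, c₁, hc₁, c₂, hc₂, hball⟩ := hs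
  set R := min c₁ 1
  have hR : R ∈ Ioc (0 : ℝ) 1 := ⟨lt_min hc₁ one_pos, min_le_right _ _⟩
  refine sub_nonpos.1 (le_of_eventually_rpow_le_mul_rpow (a := 0) (K := C ^ 2 * c₂ * R ^ s / R) ?_)
  filter_upwards [Ioo_mem_nhdsGT hR.1] with r hr
  have hr' : r ∈ Ioc (0 : ℝ) 1 := ⟨hr.1, hr.2.le.trans hR.2⟩
  have hcoef : 0 ≤ c₂ * (R / r) ^ s := mul_nonneg hc₂.le (rpow_nonneg (div_pos hR.1 hr.1).le s)
  have hchain : 2 * R ≤ 2 * (C ^ 2 * c₂ * ((R / r) ^ s * r)) :=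
    calc 2 * R ≤ C * μ.real (ball 1 R) := h.two_mul_le_mul_measureReal_ball_one hR
      _ ≤ C * (c₂ * (R / r) ^ s * μ.real (ball 1 r)) := mul_le_mul_of_nonneg_left
          (hball 1 (h.Icc_subset_msupp ⟨zero_le_one, le_rfl⟩) r R hr.1 hr.2.le (min_le_left _ _))
          h.pos.le
      _ ≤ C * (c₂ * (R / r) ^ s * (C * (2 * r))) := mul_le_mul_of_nonneg_left
          (mul_le_mul_of_nonneg_left (h.measureReal_ball_one_le hr') hcoef) h.pos.le
      _ = 2 * (C ^ 2 * c₂ * ((R / r) ^ s * r)) := by ring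
  rw [div_rpow_mul_self hR.1.le hr.1] at hchain
  rw [rpow_zero, div_mul_eq_mul_div, one_le_div hR.1]
  linarith

lemma le_one_of_mem_lowerASet {s : ℝ} (hs : s ∈ lowerASet μ) : s ≤ 1 := by
  obtain ⟨-, c₁, hc₁, c₂, hc₂, hball⟩ := hs
  set R := min c₁ 1
  have hR : R ∈ Ioc (0 : ℝ) 1 := ⟨lt_min hc₁ one_pos, min_le_right _ _⟩
  refine sub_nonneg.1 (le_of_eventually_rpow_le_mul_rpow (b := 0) (K := C ^ 2 * R / (c₂ * R ^ s)) ?_)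
  filter_upwards [Ioo_mem_nhdsGT hR.1] with r hr
  have hr' : r ∈ Ioc (0 : ℝ) 1 := ⟨hr.1, hr.2.le.trans hR.2⟩
  have hcoef : 0 ≤ c₂ * (R / r) ^ s := mul_nonneg hc₂.le (rpow_nonneg (div_pos hR.1 hr.1).le s)
  have hchain : 2 * (c₂ * ((R / r) ^ s * r)) ≤ 2 * (C ^ 2 * R) :=
    calc 2 * (c₂ * ((R / r) ^ s * r)) = c₂ * (R / r) ^ s * (2 * r) := by ring
      _ ≤ c₂ * (R / r) ^ s * (C * μ.real (ball 1 r)) :=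
          mul_le_mul_of_nonneg_left (h.two_mul_le_mul_measureReal_ball_one hr') hcoef
      _ = C * (c₂ * (R / r) ^ s * μ.real (ball 1 r)) := by ring
      _ ≤ C * μ.real (ball 1 R) := mul_le_mul_of_nonneg_left
          (hball 1 (h.Icc_subset_msupp ⟨zero_le_one, le_rfl⟩) r R hr.1 hr.2.le (min_le_left _ _))
          h.pos.le
      _ ≤ C * (C * (2 * R)) := mul_le_mul_of_nonneg_left (h.measureReal_ball_one_le hR) h.pos.le
      _ = 2 * (C ^ 2 * R) := by ring
  rw [div_rpow_mul_self hR.1.le hr.1] at hchain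
  have hRs : 0 < R ^ s := rpow_pos_of_pos hR.1 s
  rw [rpow_zero, mul_one, le_div_iff₀ (mul_pos hc₂ hRs)]
  linarith

lemma mem_lowerASet (hsupp : msupp μ ⊆ Icc 0 1) {s : ℝ} (hs₀ : 0 ≤ s) (hs₁ : s < 1) :
    s ∈ lowerASet μ := by
  set c := min 1 (2 * (1 - s))
  have hc : 0 < c := lt_min one_pos (by linarith)
  refine ⟨hs₀, 1, one_pos, c / C ^ 2, div_pos hc (pow_pos h.pos 2),
    fun x hx r R hr hrR hR => ?_⟩
  have hx := hsupp hx
  have hR' : R ∈ Ioc (0 : ℝ) 1 := ⟨hr.trans_le hrR, hR⟩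
  have hC := h.pos
  calc c / C ^ 2 * (R / r) ^ s * μ.real (ball x r)
      ≤ c / C ^ 2 * (R / r) ^ s * (C * logGauge x r) :=
        mul_le_mul_of_nonneg_left (h x hx r ⟨hr, hrR.trans hR⟩).2
          (mul_nonneg (div_pos hc (pow_pos hC 2)).le (rpow_nonneg (div_pos hR'.1 hr).le s))
    _ = (c * (R / r) ^ s * logGauge x r) / C := by field_simp
    _ ≤ logGauge x R / C :=
        div_le_div_of_nonneg_right (mul_rpow_mul_logGauge_le hs₁ hx.2 hr hrR hR) hC.le
    _ ≤ μ.real (ball x R) := by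
        rw [div_le_iff₀ hC, mul_comm]; exact (h x hx R hR').1

lemma dimL_eq_one (hsupp : msupp μ ⊆ Icc 0 1) : dimL μ = 1 :=
  ((isLUB_Ico zero_lt_one).of_subset_of_superset isLUB_Iic
    (fun _ hs => h.mem_lowerASet hsupp hs.1 hs.2) fun _ => h.le_one_of_mem_lowerASet).csSup_eq
    ⟨0, h.mem_lowerASet hsupp le_rfl one_pos⟩

lemma dimA_eq_one (hsupp : msupp μ ⊆ Icc 0 1) : dimA μ = 1 :=
  IsLeast.csInf_eq ⟨h.one_mem_upperASet hsupp, fun _ => h.one_le_of_mem_upperASet⟩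

lemma not_isSRegular (hsupp : msupp μ ⊆ Icc 0 1) (s : ℝ) : ¬ IsSRegular μ s := by
  rintro ⟨c, hc, hreg⟩
  rw [h.msupp_eq hsupp, Real.diam_Icc zero_le_one, sub_zero] at hreg
  have hball : ∀ x ∈ Icc (0 : ℝ) 1, ∀ r ∈ Ioo (0 : ℝ) 1,
      c⁻¹ * r ^ s ≤ μ.real (ball x r) ∧ μ.real (ball x r) ≤ c * r ^ s := by
    intro x hx r hr
    obtain ⟨hlow, hup⟩ := hreg x hx r hr.1 hr.2
    have hfin := (ENNReal.toReal_pos_iff.1 (h.measureReal_ball_pos hx ⟨hr.1, hr.2.le⟩)).2.ne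
    exact ⟨(ENNReal.ofReal_le_iff_le_toReal hfin).1 hlow,
      ENNReal.toReal_le_of_le_ofReal (by have := rpow_pos_of_pos hr.1 s; positivity) hup⟩
  have hC := h.pos
  have h1 : (1 : ℝ) ∈ Icc 0 1 := ⟨zero_le_one, le_rfl⟩
  have hs₁ : 1 ≤ s := by
    refine le_of_eventually_rpow_le_mul_rpow (K := 2 * C * c) ?_
    filter_upwards [Ioo_mem_nhdsGT one_pos] with r hr
    have := (hball 1 h1 r hr).1.trans (h.measureReal_ball_one_le ⟨hr.1, hr.2.le⟩)
    rw [inv_mul_le_iff₀ hc] at this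
    rw [rpow_one]
    linarith
  have hs₂ : s ≤ 1 := by
    refine le_of_eventually_rpow_le_mul_rpow (K := C * c / 2) ?_
    filter_upwards [Ioo_mem_nhdsGT one_pos] with r hr
    have := (h.two_mul_le_mul_measureReal_ball_one ⟨hr.1, hr.2.le⟩).trans
      (mul_le_mul_of_nonneg_left (hball 1 h1 r hr).2 hC.le)
    rw [rpow_one]
    linarith
  obtain rfl : s = 1 := le_antisymm hs₂ hs₁
  obtain ⟨r, hlog, hr⟩ := ((tendsto_log_nhdsGT_zero.eventually_lt_atBot (2 - C * c)).and
    (Ioo_mem_nhdsGT one_pos)).exists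
  have h0 : (0 : ℝ) ∈ Icc 0 1 := ⟨le_rfl, zero_le_one⟩
  have := (h 0 h0 r ⟨hr.1, hr.2.le⟩).1.trans (mul_le_mul_of_nonneg_left (hball 0 h0 r hr).2 hC.le)
  rw [logGauge_zero hr.1.le, rpow_one] at this
  nlinarith [hr.1]

end IsLogGaugeComparable

-- the distribution function of the density `(1 - log t) / 2` on `[0, 1]`
noncomputable def logCDF (t : ℝ) : ℝ := t * (2 - log t) / 2

lemma logCDF_zero : logCDF 0 = 0 := by simp [logCDF]

lemma logCDF_one : logCDF 1 = 1 := by norm_num [logCDF]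

lemma continuous_logCDF : Continuous logCDF := by
  have h : logCDF = fun t => t - t * log t / 2 := by ext t; simp only [logCDF]; ring
  rw [h]
  fun_prop

lemma logCDF_le_tangent {x y : ℝ} (hx : 0 < x) (hy : 0 ≤ y) :
    logCDF y ≤ logCDF x + (y - x) * (1 - log x) / 2 := by
  have hlog_ratio : y * (log x - log y) ≤ x - y := by
    rcases hy.eq_or_lt with rfl | hy
    · simpa using hx.le
    · have h := mul_le_mul_of_nonneg_left (log_le_sub_one_of_pos (div_pos hx hy)) hy.le
      rw [log_div hx.ne' hy.ne', mul_sub_one, mul_div_cancel₀ _ hy.ne'] at h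
      linarith
  simp only [logCDF]
  linarith

lemma logCDF_add_le {y h : ℝ} (hy : 0 ≤ y) (hh : 0 ≤ h) :
    logCDF (y + h) ≤ logCDF y + logCDF h := by
  have hmono : ∀ {u v : ℝ}, 0 ≤ u → 0 ≤ v → u * log u ≤ u * log (u + v) := by
    intro u v hu hv
    rcases hu.eq_or_lt with rfl | hu
    · simp
    · exact mul_le_mul_of_nonneg_left (log_le_log hu (by linarith)) hu.le
  have h₁ := hmono hy hh
  have h₂ := hmono hh hy
  rw [add_comm h y] at h₂
  simp only [logCDF]
  linarith

lemma monotoneOn_logCDF : MonotoneOn logCDF (Icc 0 1) := by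
  intro a ha b hb hab
  rcases hb.1.eq_or_lt with hb0 | hb0
  · rw [← hb0, le_antisymm (hab.trans hb0.ge) ha.1]
  · have h := logCDF_le_tangent hb0 ha.1
    have hlog : log b ≤ 0 := log_nonpos hb.1 hb.2
    nlinarith

noncomputable def logCDFExtend (x : ℝ) : ℝ := logCDF (projIcc 0 1 zero_le_one x)

lemma continuous_logCDFExtend : Continuous logCDFExtend :=
  continuous_logCDF.comp (continuous_subtype_val.comp continuous_projIcc)

lemma monotone_logCDFExtend : Monotone logCDFExtend := fun _ _ hxy =>
  monotoneOn_logCDF (projIcc 0 1 _ _).2 (projIcc 0 1 _ _).2 (monotone_projIcc zero_le_one hxy)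

lemma logCDFExtend_of_mem {x : ℝ} (hx : x ∈ Icc 0 1) : logCDFExtend x = logCDF x := by
  simp [logCDFExtend, projIcc_of_mem _ hx]

lemma logCDFExtend_of_nonpos {x : ℝ} (hx : x ≤ 0) : logCDFExtend x = 0 := by
  simp [logCDFExtend, projIcc_of_le_left _ hx, logCDF_zero]

lemma logCDFExtend_of_one_le {x : ℝ} (hx : 1 ≤ x) : logCDFExtend x = 1 := by
  simp [logCDFExtend, projIcc_of_right_le _ hx, logCDF_one]

lemma logCDFExtend_sub_le {y z : ℝ} (hzy : z ≤ y) :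
    logCDFExtend y - logCDFExtend z ≤ logCDF (min (y - z) 1) := by
  set u : ℝ := (projIcc 0 1 zero_le_one y : ℝ)
  set v : ℝ := (projIcc 0 1 zero_le_one z : ℝ)
  have hu : u ∈ Icc (0 : ℝ) 1 := (projIcc 0 1 _ y).2
  have hv : v ∈ Icc (0 : ℝ) 1 := (projIcc 0 1 _ z).2
  have hvu : v ≤ u := monotone_projIcc zero_le_one hzy
  have hlip : u - v ≤ y - z :=
    (le_abs_self _).trans ((abs_projIcc_sub_projIcc zero_le_one).trans_eq
      (abs_of_nonneg (sub_nonneg.2 hzy)))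
  have hsub : logCDF u ≤ logCDF v + logCDF (u - v) := by
    simpa using logCDF_add_le hv.1 (sub_nonneg.2 hvu)
  have hmono : logCDF (u - v) ≤ logCDF (min (y - z) 1) :=
    monotoneOn_logCDF ⟨sub_nonneg.2 hvu, by linarith [hu.2, hv.1]⟩
      ⟨le_min (sub_nonneg.2 hzy) zero_le_one, min_le_right _ _⟩
      (le_min hlip (by linarith [hu.2, hv.1]))
  change logCDF u - logCDF v ≤ _
  linarith

noncomputable def logStieltjes : StieltjesFunction ℝ where
  toFun := logCDFExtend
  mono' := monotone_logCDFExtend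
  right_continuous' _ := continuous_logCDFExtend.continuousWithinAt

lemma coe_logStieltjes : ⇑logStieltjes = logCDFExtend := rfl

noncomputable def logMeasure : Measure ℝ := logStieltjes.measure

instance : IsProbabilityMeasure logMeasure := by
  constructor
  have hbot : Tendsto logStieltjes atBot (𝓝 0) :=
    tendsto_const_nhds.congr' <| (eventually_le_atBot 0).mono fun _ hx =>
      (logCDFExtend_of_nonpos hx).symm
  have htop : Tendsto logStieltjes atTop (𝓝 1) :=
    tendsto_const_nhds.congr' <| (eventually_ge_atTop 1).mono fun _ hx =>
      (logCDFExtend_of_one_le hx).symm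
  rw [logMeasure, logStieltjes.measure_univ hbot htop, sub_zero, ENNReal.ofReal_one]

lemma logMeasure_real_ball (x : ℝ) {r : ℝ} (hr : 0 ≤ r) :
    logMeasure.real (ball x r) = logCDFExtend (x + r) - logCDFExtend (x - r) := by
  rw [measureReal_def, Real.ball_eq_Ioo, logMeasure, logStieltjes.measure_Ioo, coe_logStieltjes,
    (continuous_logCDFExtend.continuousAt (x := x + r)).continuousWithinAt.leftLim_eq,
    ENNReal.toReal_ofReal (sub_nonneg.2 (monotone_logCDFExtend (by linarith)))]

lemma logGauge_le_four_mul_logMeasure {x r : ℝ} (hx : x ∈ Icc 0 1) (hr : r ∈ Ioc 0 1) :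
    logGauge x r ≤ 4 * logMeasure.real (ball x r) := by
  obtain ⟨hx0, hx1⟩ := hx
  obtain ⟨hr0, hr1⟩ := hr
  set a := max x r
  have ha : 0 < a := hr0.trans_le (le_max_right x r)
  have har : r ≤ a := le_max_right x r
  have ha1 : a ≤ 1 := max_le hx1 hr1
  have hlog : log a ≤ 0 := log_nonpos ha.le ha1
  -- `[a - r, a] ⊆ [x - r, x + r] ∩ [0, 1]`, and the density on it is at least `(1 - log a) / 2`
  have hinner : logCDFExtend a - logCDFExtend (a - r) ≤
      logCDFExtend (x + r) - logCDFExtend (x - r) :=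
    sub_le_sub (monotone_logCDFExtend (max_le (by linarith) (by linarith)))
      (monotone_logCDFExtend (by linarith [le_max_left x r]))
  rw [logCDFExtend_of_mem ⟨ha.le, ha1⟩, logCDFExtend_of_mem ⟨by linarith, by linarith⟩] at hinner
  calc logGauge x r = r * (2 - log a) := rfl
    _ ≤ 2 * r * (1 - log a) := by nlinarith [mul_nonneg hr0.le (neg_nonneg.2 hlog)]
    _ ≤ 4 * (logCDF a - logCDF (a - r)) := by
        linarith [logCDF_le_tangent ha (by linarith : 0 ≤ a - r)]
    _ ≤ 4 * logMeasure.real (ball x r) := by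
        rw [logMeasure_real_ball x hr0.le]; linarith

lemma logMeasure_le_logGauge {x r : ℝ} (hx : x ∈ Icc 0 1) (hr : r ∈ Ioc 0 1) :
    logMeasure.real (ball x r) ≤ logGauge x r := by
  obtain ⟨hx0, hx1⟩ := hx
  obtain ⟨hr0, hr1⟩ := hr
  rw [logMeasure_real_ball x hr0.le, logGauge]
  rcases le_or_gt (2 * r) x with hfar | hnear
  · -- away from `0` the density `(1 - log t) / 2` is at most its value at `x - r ≥ x / 2`
    set b : ℝ := (projIcc 0 1 zero_le_one (x + r) : ℝ)
    have hb : b ∈ Icc (0 : ℝ) 1 := (projIcc 0 1 _ _).2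
    have hbx : b ≤ x + r := by
      simp only [b, coe_projIcc]; exact max_le (by linarith) (min_le_right _ _)
    have hy : 0 < x - r := by linarith
    have hlog_y : log x - log 2 ≤ log (x - r) := by
      rw [← log_div (by linarith) two_ne_zero]; exact log_le_log (by linarith) (by linarith)
    have hlog_y' : log (x - r) ≤ 0 := log_nonpos hy.le (by linarith)
    rw [max_eq_left (by linarith), logCDFExtend_of_mem ⟨hy.le, by linarith⟩]
    calc logCDF b - logCDF (x - r) ≤ (b - (x - r)) * (1 - log (x - r)) / 2 := by
          linarith [logCDF_le_tangent hy hb.1]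
      _ ≤ 2 * r * (1 - log (x - r)) / 2 := by gcongr <;> linarith
      _ ≤ r * (1 + log 2 - log x) := by nlinarith
      _ ≤ r * (2 - log x) := mul_le_mul_of_nonneg_left (by linarith [log_two_lt_d9]) hr0.le
  · -- near `0` concavity of `logCDF` bounds the mass by that of `[0, 2r]`
    set m := min (2 * r) 1
    have hm : 0 < m := lt_min (by linarith) one_pos
    have ham : max x r ≤ m := le_min (max_le hnear.le (by linarith)) (max_le hx1 hr1)
    have hlog_m : log (max x r) ≤ log m := log_le_log (hr0.trans_le (le_max_right x r)) ham
    have hlog_m' : log m ≤ 0 := log_nonpos hm.le (min_le_right _ _)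
    calc logCDFExtend (x + r) - logCDFExtend (x - r) ≤ logCDF m := by
          have := logCDFExtend_sub_le (by linarith : x - r ≤ x + r)
          rwa [show x + r - (x - r) = 2 * r by ring] at this
      _ = m * (2 - log m) / 2 := rfl
      _ ≤ 2 * r * (2 - log (max x r)) / 2 := by
          have := mul_le_mul (min_le_left (2 * r) 1) (by linarith : 2 - log m ≤ 2 - log (max x r))
            (by linarith) (by linarith)
          linarith
      _ = r * (2 - log (max x r)) := by ring

lemma isLogGaugeComparable_logMeasure : IsLogGaugeComparable logMeasure 4 := fun _ hx _ hr =>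
  ⟨logGauge_le_four_mul_logMeasure hx hr,
    (logMeasure_le_logGauge hx hr).trans (le_mul_of_one_le_left (logGauge_pos hx.2 hr).le
      (by norm_num))⟩

lemma msupp_logMeasure_subset : msupp logMeasure ⊆ Icc 0 1 := by
  intro x hx
  have hnull : ∀ r > 0, logMeasure.real (ball x r) ≠ 0 := fun r hr h0 =>
    (hx r hr).ne' ((measureReal_eq_zero_iff).1 h0)
  by_contra hxI
  rcases not_and_or.1 hxI with hx0 | hx1
  · rw [not_le] at hx0
    apply hnull (-x) (by linarith)
    rw [logMeasure_real_ball x (by linarith), logCDFExtend_of_nonpos (by linarith),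
      logCDFExtend_of_nonpos (by linarith), sub_zero]
  · rw [not_le] at hx1
    apply hnull (x - 1) (by linarith)
    rw [logMeasure_real_ball x (by linarith), logCDFExtend_of_one_le (by linarith),
      logCDFExtend_of_one_le (by linarith), sub_self]

theorem exists_measure_equal_assouad_dims_not_regular :
    ∃ μ : Measure ℝ, IsProbabilityMeasure μ ∧ msupp μ ⊆ Set.Icc 0 1 ∧
      dimL μ = 1 ∧ dimA μ = 1 ∧ ∀ s : ℝ, 0 ≤ s → ¬ IsSRegular μ s := by
  have h := isLogGaugeComparable_logMeasure
  have hsupp := msupp_logMeasure_subset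
  exact ⟨logMeasure, inferInstance, hsupp, h.dimL_eq_one hsupp, h.dimA_eq_one hsupp,
    fun s _ => h.not_isSRegular hsupp s⟩
end
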